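/- arXiv:2105.04970 — 6 statements merged into one kernel-verified Lean document; each statement's English description precedes it below -/
import Mathlib

section
/- Let H be a Hermitian operator on a finite-dimensional complex inner product space V, let E₀ be its least eigenvalue, and let Φ be a unit eigenvector with HΦ = E₀Φ. Then for every linear operator A on V, the expectation ⟨Φ, [A*, [H, A]] Φ⟩ is a real number, it equals ⟨AΦ, (H − E₀)AΦ⟩ + ⟨A*Φ, (H − E₀)A*Φ⟩, and consequently ⟨AΦ, (H − E₀·id)AΦ⟩ ≤ ⟨Φ, [A*, [H, A]] Φ⟩. -/
/-!
Put `K = H - E₀`. As `H` and `K` differ by a scalar, `[H, A] = [K, A]`, and as `KΦ = 0` with `K`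
symmetric, expanding `⟪Φ, [A*, [K, A]] Φ⟫` leaves only `⟪AΦ, K AΦ⟫ + ⟪A*Φ, K A*Φ⟫`. Both terms are
real because `K` is symmetric, and nonnegative because `E₀` is the least eigenvalue: in an
eigenbasis of `H`, `⟪x, K x⟫ = ∑ᵢ (λᵢ - E₀) |xᵢ|²`.
-/

open Module.End

namespace LinearMap

variable {𝕜 E : Type*} [RCLike 𝕜] [NormedAddCommGroup E] [InnerProductSpace 𝕜 E]
  [FiniteDimensional 𝕜 E]

theorem IsSymmetric.isPositive_sub_of_forall_le_eigenvalue {T : E →ₗ[𝕜] E} (hT : T.IsSymmetric)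
    {c : ℝ} (hc : ∀ μ : ℝ, HasEigenvalue T μ → c ≤ μ) :
    (T - (c : 𝕜) • id).IsPositive := by
  refine ⟨hT.sub (isPositive_id.isSymmetric.smul (RCLike.conj_ofReal c)), fun x => ?_⟩
  set b := hT.eigenvectorBasis rfl
  have hrepr : ∀ i, b.repr ((T - (c : 𝕜) • id : E →ₗ[𝕜] E) x) i
      = ((hT.eigenvalues rfl i - c : ℝ) : 𝕜) * b.repr x i := by
    intro i
    simp only [b, sub_apply, smul_apply, id_apply, map_sub, map_smul, PiLp.sub_apply,
      PiLp.smul_apply, hT.eigenvectorBasis_apply_self_apply, sub_mul, smul_eq_mul]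
  rw [← b.repr.inner_map_map, PiLp.inner_apply, map_sum]
  refine Finset.sum_nonneg fun i _ => ?_
  rw [hrepr, RCLike.inner_apply, map_mul (starRingEnd 𝕜), RCLike.conj_ofReal, mul_left_comm,
    RCLike.mul_conj, RCLike.re_ofReal_mul]
  exact mul_nonneg (sub_nonneg.2 (hc _ (hT.hasEigenvalue_eigenvalues rfl i)))
    (by norm_cast; positivity)

theorem inner_lie_adjoint_lie_apply_self_of_apply_eq_zero {K : E →ₗ[𝕜] E} (hK : K.IsSymmetric)
    {Φ : E} (hKΦ : K Φ = 0) (A : E →ₗ[𝕜] E) :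
    inner 𝕜 Φ (⁅A.adjoint, ⁅K, A⁆⁆ Φ) = inner 𝕜 (A Φ) (K (A Φ))
      + inner 𝕜 (A.adjoint Φ) (K (A.adjoint Φ)) := by
  have hΦK : ∀ y, inner 𝕜 Φ (K y) = 0 := fun y => by rw [← hK, hKΦ, inner_zero_left]
  simp only [Ring.lie_def, Module.End.mul_apply, sub_apply, inner_sub_right,
    adjoint_inner_right, ← adjoint_inner_left A, hKΦ, map_zero, inner_zero_right, hΦK]
  ring

end LinearMap

theorem double_commutator_expectation_general
    {V : Type*} [NormedAddCommGroup V] [InnerProductSpace ℂ V] [FiniteDimensional ℂ V]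
    (H : V →ₗ[ℂ] V) (hH : H.IsSymmetric) (E₀ : ℝ)
    (hmin : ∀ μ : ℝ, Module.End.HasEigenvalue (H : Module.End ℂ V) (μ : ℂ) → E₀ ≤ μ)
    (Φ : V) (hHΦ : H Φ = (E₀ : ℂ) • Φ)
    (A : V →ₗ[ℂ] V) :
    ((inner ℂ Φ (((LinearMap.adjoint A) ∘ₗ (H ∘ₗ A - A ∘ₗ H)
        - (H ∘ₗ A - A ∘ₗ H) ∘ₗ (LinearMap.adjoint A)) Φ) : ℂ)).im = 0 ∧
    (inner ℂ Φ (((LinearMap.adjoint A) ∘ₗ (H ∘ₗ A - A ∘ₗ H)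
        - (H ∘ₗ A - A ∘ₗ H) ∘ₗ (LinearMap.adjoint A)) Φ) : ℂ)
      = (inner ℂ (A Φ) (((H - (E₀ : ℂ) • LinearMap.id : V →ₗ[ℂ] V)) (A Φ)) : ℂ)
        + (inner ℂ ((LinearMap.adjoint A) Φ)
            (((H - (E₀ : ℂ) • LinearMap.id : V →ₗ[ℂ] V)) ((LinearMap.adjoint A) Φ)) : ℂ) ∧
    ((inner ℂ (A Φ) (((H - (E₀ : ℂ) • LinearMap.id : V →ₗ[ℂ] V)) (A Φ)) : ℂ)).re
      ≤ ((inner ℂ Φ (((LinearMap.adjoint A) ∘ₗ (H ∘ₗ A - A ∘ₗ H)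
        - (H ∘ₗ A - A ∘ₗ H) ∘ₗ (LinearMap.adjoint A)) Φ) : ℂ)).re := by
  set K : V →ₗ[ℂ] V := H - (E₀ : ℂ) • LinearMap.id
  have hK : K.IsPositive := hH.isPositive_sub_of_forall_le_eigenvalue hmin
  have hKΦ : K Φ = 0 := by simp [K, hHΦ]
  have hlie : H ∘ₗ A - A ∘ₗ H = ⁅K, A⁆ := by
    simp [K, Ring.lie_def, Module.End.mul_eq_comp, LinearMap.sub_comp, LinearMap.comp_sub,
      LinearMap.smul_comp, LinearMap.comp_smul]
  have key : inner ℂ Φ ((A.adjoint ∘ₗ (H ∘ₗ A - A ∘ₗ H) - (H ∘ₗ A - A ∘ₗ H) ∘ₗ A.adjoint) Φ)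
      = inner ℂ (A Φ) (K (A Φ)) + inner ℂ (A.adjoint Φ) (K (A.adjoint Φ)) := by
    rw [hlie, ← Module.End.mul_eq_comp, ← Module.End.mul_eq_comp, ← Ring.lie_def]
    exact LinearMap.inner_lie_adjoint_lie_apply_self_of_apply_eq_zero hK.isSymmetric hKΦ A
  refine ⟨?_, key, ?_⟩
  · rw [key, Complex.add_im, ← RCLike.im_to_complex, ← RCLike.im_to_complex,
      hK.isSymmetric.im_inner_self_apply, hK.isSymmetric.im_inner_self_apply, add_zero]
  · rw [key, Complex.add_re]
    exact le_add_of_nonneg_right (hK.re_inner_nonneg_right _)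

/-- For a Hermitian operator `H` on a finite-dimensional complex inner
product space with least eigenvalue `E₀` and unit ground state `Φ`, and any operator `A`,
the expectation `⟨Φ, [A*, [H, A]] Φ⟩` is real, equals
`⟨AΦ, (H − E₀)AΦ⟩ + ⟨A*Φ, (H − E₀)A*Φ⟩`, and dominates `⟨AΦ, (H − E₀)AΦ⟩`. -/
theorem double_commutator_expectation
    {V : Type*} [NormedAddCommGroup V] [InnerProductSpace ℂ V] [FiniteDimensional ℂ V]
    (H : V →ₗ[ℂ] V) (hH : H.IsSymmetric) (E₀ : ℝ)
    (hmin : ∀ μ : ℝ, Module.End.HasEigenvalue (H : Module.End ℂ V) (μ : ℂ) → E₀ ≤ μ)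
    (Φ : V) (hΦ : ‖Φ‖ = 1) (hHΦ : H Φ = (E₀ : ℂ) • Φ)
    (A : V →ₗ[ℂ] V) :
    ((inner ℂ Φ (((LinearMap.adjoint A) ∘ₗ (H ∘ₗ A - A ∘ₗ H)
        - (H ∘ₗ A - A ∘ₗ H) ∘ₗ (LinearMap.adjoint A)) Φ) : ℂ)).im = 0 ∧
    (inner ℂ Φ (((LinearMap.adjoint A) ∘ₗ (H ∘ₗ A - A ∘ₗ H)
        - (H ∘ₗ A - A ∘ₗ H) ∘ₗ (LinearMap.adjoint A)) Φ) : ℂ)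
      = (inner ℂ (A Φ) (((H - (E₀ : ℂ) • LinearMap.id : V →ₗ[ℂ] V)) (A Φ)) : ℂ)
        + (inner ℂ ((LinearMap.adjoint A) Φ)
            (((H - (E₀ : ℂ) • LinearMap.id : V →ₗ[ℂ] V)) ((LinearMap.adjoint A) Φ)) : ℂ) ∧
    ((inner ℂ (A Φ) (((H - (E₀ : ℂ) • LinearMap.id : V →ₗ[ℂ] V)) (A Φ)) : ℂ)).re
      ≤ ((inner ℂ Φ (((LinearMap.adjoint A) ∘ₗ (H ∘ₗ A - A ∘ₗ H)
        - (H ∘ₗ A - A ∘ₗ H) ∘ₗ (LinearMap.adjoint A)) Φ) : ℂ)).re :=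
  double_commutator_expectation_general H hH E₀ hmin Φ hHΦ A
end

section
/- Let H be a Hermitian operator on a finite-dimensional complex inner product space V, let Φ be an eigenvector of H with eigenvalue E₀, let A be any linear operator on V, and let g: ℝ → ℂ be integrable. Define ĝ(E) = ∫_ℝ g(t) e^{iEt} dt. Then ∫_ℝ g(t) · e^{itH} A e^{−itH} Φ dt = ĝ(H − E₀)(AΦ), where ĝ(H − E₀) is the operator acting as multiplication by ĝ(λ − E₀) on each eigenspace of H with eigenvalue λ. -/
/-- Functional calculus with respect to an orthonormal eigenbasis `b` with (real)
eigenvalues `μ`: the operator acting as multiplication by `h (μ i)` on the span of `b i`. -/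
noncomputable def specFun {ι V : Type*} [Fintype ι] [NormedAddCommGroup V]
    [InnerProductSpace ℂ V] (b : OrthonormalBasis ι ℂ V) (μ : ι → ℝ) (h : ℝ → ℂ) :
    V →L[ℂ] V :=
  ∑ i, h (μ i) • ((innerSL ℂ (b i)).smulRight (b i))

/-!
Since `Φ` is an eigenvector, `e^{-itH} Φ = e^{-itE₀} Φ`, while in the eigenbasis of `H` the
operator `e^{itH}` is the functional calculus of `λ ↦ e^{itλ}`. Hence the integrand is
`(λ ↦ g(t) e^{i(λ - E₀)t})(H) (AΦ)`, a finite sum over the eigenbasis whose coefficients are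
integrable in `t` because `|e^{is}| = 1`; integrating term by term gives `ĝ(H - E₀)(AΦ)`.
-/

open MeasureTheory Complex

theorem NormedSpace.exp_apply_of_apply_eq_smul {𝕂 E : Type*} [RCLike 𝕂] [NormedAddCommGroup E]
    [NormedSpace 𝕂 E] [CompleteSpace E] {T : E →L[𝕂] E} {c : 𝕂} {v : E} (h : T v = c • v) :
    NormedSpace.exp T v = NormedSpace.exp c • v := by
  have hpow : ∀ n : ℕ, (T ^ n) v = c ^ n • v := by
    intro n
    induction n with
    | zero => simp
    | succ n ih => rw [pow_succ, mul_apply_eq_comp, h, map_smul, ih, smul_smul, pow_succ']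
  have hT :=
    (NormedSpace.exp_series_hasSum_exp' (𝕂 := 𝕂) T).mapL (ContinuousLinearMap.apply 𝕂 E v)
  have hc := (NormedSpace.exp_series_hasSum_exp' (𝕂 := 𝕂) c).smul_const v
  refine hT.unique ?_
  simpa only [ContinuousLinearMap.apply_apply, smul_apply, hpow, smul_smul,
    smul_eq_mul] using hc

theorem MeasureTheory.Integrable.mul_cexp_I_mul_ofReal {μ : Measure ℝ} {g : ℝ → ℂ}
    (hg : Integrable g μ) (a : ℝ) : Integrable (fun t : ℝ => g t * cexp (I * a * t)) μ := by
  refine hg.mul_bdd (c := 1) (by fun_prop) (Filter.Eventually.of_forall fun t => ?_)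
  rw [norm_exp]
  simp

section specFun

variable {ι V : Type*} [Fintype ι] [NormedAddCommGroup V] [InnerProductSpace ℂ V]
  (b : OrthonormalBasis ι ℂ V) (μ : ι → ℝ)

theorem specFun_apply (h : ℝ → ℂ) (v : V) :
    specFun b μ h v = ∑ i, (h (μ i) * inner ℂ (b i) v) • b i := by
  simp only [specFun, sum_apply, smul_apply, ContinuousLinearMap.smulRight_apply,
    innerSL_apply_apply, smul_smul]

theorem specFun_apply_basis (h : ℝ → ℂ) (j : ι) : specFun b μ h (b j) = h (μ j) • b j := by
  classical
  simp [specFun_apply, b.inner_eq_ite]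

theorem smul_specFun_apply (c : ℂ) (h : ℝ → ℂ) (v : V) :
    c • specFun b μ h v = specFun b μ (fun lam => c * h lam) v := by
  simp only [specFun_apply, Finset.smul_sum, smul_smul, mul_assoc]

theorem integral_specFun_apply [CompleteSpace V] {X : Type*} [MeasurableSpace X] {ν : Measure X}
    (f : X → ℝ → ℂ) (hf : ∀ i, Integrable (fun x => f x (μ i)) ν) (v : V) :
    ∫ x, specFun b μ (f x) v ∂ν = specFun b μ (fun lam => ∫ x, f x lam ∂ν) v := by
  simp only [specFun_apply]
  rw [integral_finsetSum _ fun i _ => ((hf i).mul_const _).smul_const _]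
  simp only [integral_smul_const, integral_mul_const]

theorem exp_smul_eq_specFun [CompleteSpace V] {H : V →L[ℂ] V}
    (hH : ∀ i, H (b i) = (μ i : ℂ) • b i) (s : ℂ) :
    NormedSpace.exp (s • H) = specFun b μ (fun lam => cexp (s * lam)) :=
  ContinuousLinearMap.coe_injective <| b.toBasis.ext fun j => by
    have hsH : (s • H) (b j) = (s * μ j) • b j := by
      rw [smul_apply, hH, smul_smul]
    simp only [ContinuousLinearMap.coe_coe, OrthonormalBasis.coe_toBasis, specFun_apply_basis,
      NormedSpace.exp_apply_of_apply_eq_smul hsH, Complex.exp_eq_exp_ℂ]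

end specFun

/-- For a Hermitian `H` (given by an orthonormal eigenbasis `b` with real
eigenvalues `μ`), an eigenvector `Φ` with `HΦ = E₀Φ`, any operator `A`, and integrable
`g : ℝ → ℂ`, the smeared Heisenberg evolution applied to `Φ` equals `ĝ(H − E₀)(AΦ)`,
where `ĝ(E) = ∫ g(t) e^{iEt} dt`. -/
theorem smeared_evolution_eq_functional_calculus
    {V : Type*} [NormedAddCommGroup V] [InnerProductSpace ℂ V] [FiniteDimensional ℂ V]
    {ι : Type*} [Fintype ι]
    (b : OrthonormalBasis ι ℂ V) (μ : ι → ℝ)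
    (H : V →L[ℂ] V) (hH : ∀ i, H (b i) = (μ i : ℂ) • b i)
    (Φ : V) (E₀ : ℝ) (hΦ : H Φ = (E₀ : ℂ) • Φ)
    (A : V →L[ℂ] V) (g : ℝ → ℂ) (hg : MeasureTheory.Integrable g) :
    ∫ t : ℝ, g t • (NormedSpace.exp ((Complex.I * (t : ℂ)) • H))
        (A ((NormedSpace.exp (-(Complex.I * (t : ℂ)) • H)) Φ))
      = specFun b μ
          (fun lam => ∫ t : ℝ, g t * Complex.exp (Complex.I * ((lam - E₀ : ℝ) : ℂ) * (t : ℂ)))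
          (A Φ) := by
  have hΦt : ∀ t : ℝ, (-(I * t) • H) Φ = (-(I * t) * E₀) • Φ := fun t => by
    rw [smul_apply, hΦ, smul_smul]
  have hpointwise : ∀ t : ℝ,
      g t • NormedSpace.exp ((I * t) • H) (A (NormedSpace.exp (-(I * t) • H) Φ))
        = specFun b μ (fun lam => g t * cexp (I * ((lam - E₀ : ℝ) : ℂ) * t)) (A Φ) := fun t => by
    rw [NormedSpace.exp_apply_of_apply_eq_smul (hΦt t), ← Complex.exp_eq_exp_ℂ, map_smul,
      map_smul, exp_smul_eq_specFun b μ hH, smul_specFun_apply, smul_specFun_apply]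
    congr 2 with lam
    rw [← Complex.exp_add]
    push_cast
    ring_nf
  rw [integral_congr_ae (ae_of_all _ hpointwise),
    integral_specFun_apply b μ _ fun i => hg.mul_cexp_I_mul_ofReal _]
end

section
/- Let H and O be n×n complex matrices and let t ∈ ℝ. Then the map u ↦ exp(it(H + uO)) from ℝ to n×n complex matrices is differentiable, and its derivative at u is (it)·∫₀¹ exp(itw(H + uO)) · O · exp(it(1−w)(H + uO)) dw (Duhamel formula). -/
/-!
Differentiating `s ↦ exp (s • X) * exp ((1 - s) • Y)` and integrating over `[0, 1]` gives the
exact identity `exp X - exp Y = ∫₀¹ exp (s • X) * (X - Y) * exp ((1 - s) • Y)`. With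
`X = A + h • B` and `Y = A`, the difference quotient of `h ↦ exp (A + h • B)` at `0` is therefore
an integral that depends continuously on `h`, and its value at `h = 0` is the Duhamel integral.
-/

open scoped Matrix.Norms.L2Operator

open NormedSpace intervalIntegral Filter

section BanachAlgebra

variable {𝔸 : Type*} [NormedRing 𝔸] [NormedAlgebra ℝ 𝔸] [CompleteSpace 𝔸]

@[fun_prop]
theorem continuous_exp_of_real : Continuous (exp : 𝔸 → 𝔸) :=
  continuous_iff_continuousAt.2 fun x => (exp_analytic (𝕂 := ℝ) x).continuousAt

theorem hasDerivAt_exp_smul_mul_exp_one_sub_smul (X Y : 𝔸) (s : ℝ) :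
    HasDerivAt (fun s : ℝ => exp (s • X) * exp ((1 - s) • Y))
      (exp (s • X) * (X - Y) * exp ((1 - s) • Y)) s := by
  have hY : HasDerivAt (fun s : ℝ => exp ((1 - s) • Y)) (-(Y * exp ((1 - s) • Y))) s := by
    simpa [Function.comp_def] using
      (hasDerivAt_exp_smul_const' Y (1 - s)).scomp s ((hasDerivAt_id s).const_sub 1)
  refine ((hasDerivAt_exp_smul_const X s).mul hY).congr_deriv ?_
  noncomm_ring

theorem exp_sub_exp_eq_integral (X Y : 𝔸) :
    exp X - exp Y = ∫ s in (0 : ℝ)..1, exp (s • X) * (X - Y) * exp ((1 - s) • Y) := by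
  have hcont : Continuous fun s : ℝ => exp (s • X) * (X - Y) * exp ((1 - s) • Y) := by
    fun_prop
  rw [integral_eq_sub_of_hasDerivAt
    (fun s _ => hasDerivAt_exp_smul_mul_exp_one_sub_smul X Y s) (hcont.intervalIntegrable 0 1)]
  simp

theorem hasDerivAt_exp_add_smul_zero (A B : 𝔸) :
    HasDerivAt (fun h : ℝ => exp (A + h • B))
      (∫ s in (0 : ℝ)..1, exp (s • A) * B * exp ((1 - s) • A)) 0 := by
  set g : ℝ → 𝔸 := fun h => ∫ s in (0 : ℝ)..1, exp (s • (A + h • B)) * B * exp ((1 - s) • A)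
  have hg : Continuous g := continuous_parametric_intervalIntegral_of_continuous' (by fun_prop) 0 1
  have hg0 : g 0 = ∫ s in (0 : ℝ)..1, exp (s • A) * B * exp ((1 - s) • A) := by simp [g]
  rw [hasDerivAt_iff_tendsto_slope_zero, ← hg0]
  refine ((hg.tendsto 0).mono_left nhdsWithin_le_nhds).congr' ?_
  filter_upwards [self_mem_nhdsWithin] with h (hh : h ≠ 0)
  rw [zero_add, zero_smul, add_zero, exp_sub_exp_eq_integral, add_sub_cancel_left]
  simp_rw [mul_smul_comm, smul_mul_assoc, integral_smul, smul_smul, inv_mul_cancel₀ hh,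
    one_smul, g]

theorem hasDerivAt_exp_add_smul (A B : 𝔸) (x : ℝ) :
    HasDerivAt (fun h : ℝ => exp (A + h • B))
      (∫ s in (0 : ℝ)..1, exp (s • (A + x • B)) * B * exp ((1 - s) • (A + x • B))) x := by
  have h0 : HasDerivAt (fun h : ℝ => exp (A + x • B + h • B))
      (∫ s in (0 : ℝ)..1, exp (s • (A + x • B)) * B * exp ((1 - s) • (A + x • B))) (x - x) := by
    rw [sub_self]
    exact hasDerivAt_exp_add_smul_zero (A + x • B) B
  refine (h0.comp_sub_const x x).congr_of_eventuallyEq (Eventually.of_forall fun h => ?_)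
  simp only [add_assoc, ← add_smul, add_sub_cancel]

end BanachAlgebra

/-- **Duhamel formula.** For `n×n` complex matrices `H`, `O` and `t ∈ ℝ`,
the map `u ↦ exp(it(H + uO))` is differentiable in `u`, with derivative
`(it)·∫₀¹ exp(itw(H+uO)) O exp(it(1−w)(H+uO)) dw`. -/
theorem duhamel_formula {n : ℕ} (H O : Matrix (Fin n) (Fin n) ℂ) (t : ℝ) (u : ℝ) :
    HasDerivAt
      (fun u : ℝ => NormedSpace.exp ((Complex.I * (t : ℂ)) • (H + (u : ℂ) • O)))
      ((Complex.I * (t : ℂ)) • ∫ w in (0:ℝ)..1,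
        NormedSpace.exp ((Complex.I * (t : ℂ) * (w : ℂ)) • (H + (u : ℂ) • O)) * O *
        NormedSpace.exp ((Complex.I * (t : ℂ) * ((1 : ℂ) - (w : ℂ))) • (H + (u : ℂ) • O)))
      u := by
  set c := Complex.I * (t : ℂ)
  have hsmul (r : ℝ) (z : ℂ) (X : Matrix (Fin n) (Fin n) ℂ) : r • z • X = (z * r) • X := by
    rw [← Complex.coe_smul, smul_smul, mul_comm]
  have hline (v : ℝ) : c • (H + (v : ℂ) • O) = c • H + v • c • O := by
    rw [hsmul, smul_add, smul_smul, mul_comm]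
  have hintegrand (w : ℝ) :
      exp (w • (c • H + u • c • O)) * (c • O) * exp ((1 - w) • (c • H + u • c • O)) =
        c • (exp ((c * w) • (H + (u : ℂ) • O)) * O * exp ((c * (1 - w)) • (H + (u : ℂ) • O))) := by
    rw [← hline, hsmul, hsmul, mul_smul_comm, smul_mul_assoc]
    push_cast
    rfl
  simp_rw [hline, ← integral_smul, ← hintegrand]
  exact hasDerivAt_exp_add_smul _ _ u
end

section
/- Let H and O be Hermitian n×n complex matrices, let A be any n×n complex matrix, let B ∈ ℝ, and set H_B = H − B·O. Let g: ℝ → ℂ be measurable with ∫_ℝ |t|·|g(t)| dt < ∞ and ∫_ℝ |g(t)| dt < ∞. Then ‖∫_ℝ g(t)·(e^{itH_B} A e^{−itH_B} − e^{itH} A e^{−itH}) dt‖ ≤ 2|B|·‖O‖·‖A‖·∫_ℝ |t|·|g(t)| dt. In particular, the smeared Heisenberg evolution ∫_ℝ g(t) e^{itH_B} A e^{−itH_B} dt is Lipschitz continuous in the symmetry-breaking field B. -/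
open scoped Matrix.Norms.L2Operator

/-!
For skew-adjoint `X`, `Y` in a C⋆-algebra, `exp X` and `exp Y` are unitary, so along the Duhamel
path `s ↦ exp (s • X) * exp ((1 - s) • Y)` the derivative `exp (s • X) * (X - Y) * exp ((1 - s) • Y)`
has norm exactly `‖X - Y‖`; hence `‖exp X - exp Y‖ ≤ ‖X - Y‖`. Writing the difference of the two
conjugations as `(e^X - e^Y) A e^{-X} + e^Y A (e^{-X} - e^{-Y})` gives the bound `2 ‖X - Y‖ ‖A‖`,
which for `X = i t H_B`, `Y = i t H` is `2 |B| ‖O‖ ‖A‖ |t|`; integrating against `|g|` finishes.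
-/

open NormedSpace

section CStarAlgebra

variable {A : Type*} [CStarAlgebra A]

theorem norm_exp_sub_exp_le_of_mem_skewAdjoint {X Y : A} (hX : X ∈ skewAdjoint A)
    (hY : Y ∈ skewAdjoint A) : ‖exp X - exp Y‖ ≤ ‖X - Y‖ := by
  let : NormedAlgebra ℚ A := .restrictScalars ℚ ℂ A
  have unitary_exp_smul {Z : A} (hZ : Z ∈ skewAdjoint A) (s : ℝ) : exp (s • Z) ∈ unitary A :=
    exp_mem_unitary_of_mem_skewAdjoint (skewAdjoint.smul_mem s hZ)
  have hderiv (s : ℝ) : HasDerivAt (fun u : ℝ => exp (u • X) * exp ((1 - u) • Y))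
      (exp (s • X) * (X - Y) * exp ((1 - s) • Y)) s := by
    have hY' : HasDerivAt (fun u : ℝ => exp ((1 - u) • Y)) (-(Y * exp ((1 - s) • Y))) s := by
      simpa [Function.comp_def] using (hasDerivAt_exp_smul_const' (𝕂 := ℝ) Y (1 - s)).scomp s
        ((hasDerivAt_id s).const_sub 1)
    exact ((hasDerivAt_exp_smul_const (𝕂 := ℝ) X s).mul hY').congr_deriv (by noncomm_ring)
  have hdiff := norm_image_sub_le_of_norm_deriv_le_segment_01' (C := ‖X - Y‖)
    (fun s _ => (hderiv s).hasDerivWithinAt) fun s _ => by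
      rw [CStarRing.norm_mul_mem_unitary _ (unitary_exp_smul hY _),
        CStarRing.norm_mem_unitary_mul _ (unitary_exp_smul hX _)]
  simpa using hdiff

theorem norm_exp_mul_mul_exp_neg_sub_le_of_mem_skewAdjoint {X Y : A} (hX : X ∈ skewAdjoint A)
    (hY : Y ∈ skewAdjoint A) (a : A) :
    ‖exp X * a * exp (-X) - exp Y * a * exp (-Y)‖ ≤ 2 * ‖X - Y‖ * ‖a‖ := by
  let : NormedAlgebra ℚ A := .restrictScalars ℚ ℂ A
  have hsplit : exp X * a * exp (-X) - exp Y * a * exp (-Y) =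
      (exp X - exp Y) * a * exp (-X) + exp Y * (a * (exp (-X) - exp (-Y))) := by
    noncomm_ring
  have hXY : ‖exp X - exp Y‖ ≤ ‖X - Y‖ := norm_exp_sub_exp_le_of_mem_skewAdjoint hX hY
  have hXY' : ‖exp (-X) - exp (-Y)‖ ≤ ‖X - Y‖ :=
    (norm_exp_sub_exp_le_of_mem_skewAdjoint (neg_mem hX) (neg_mem hY)).trans_eq
      (by rw [neg_sub_neg, norm_sub_rev])
  rw [hsplit]
  calc _ ≤ ‖(exp X - exp Y) * a‖ + ‖a * (exp (-X) - exp (-Y))‖ := by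
        refine (norm_add_le _ _).trans_eq ?_
        rw [CStarRing.norm_mul_mem_unitary _ (exp_mem_unitary_of_mem_skewAdjoint (neg_mem hX)),
          CStarRing.norm_mem_unitary_mul _ (exp_mem_unitary_of_mem_skewAdjoint hY)]
    _ ≤ ‖X - Y‖ * ‖a‖ + ‖a‖ * ‖X - Y‖ := by
        gcongr <;> refine (norm_mul_le _ _).trans ?_ <;> gcongr
    _ = 2 * ‖X - Y‖ * ‖a‖ := by ring

theorem IsSelfAdjoint.I_mul_ofReal_smul_mem_skewAdjoint {a : A} (ha : IsSelfAdjoint a) (t : ℝ) :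
    (Complex.I * t) • a ∈ skewAdjoint A :=
  ha.smul_mem_skewAdjoint (skewAdjoint.mem_iff.mpr (by simp))

theorem norm_exp_conj_perturbed_sub_exp_conj_le {H O : A} (hH : IsSelfAdjoint H)
    (hO : IsSelfAdjoint O) (B t : ℝ) (a : A) :
    ‖exp ((Complex.I * t) • (H - (B : ℂ) • O)) * a * exp (-(Complex.I * t) • (H - (B : ℂ) • O))
      - exp ((Complex.I * t) • H) * a * exp (-(Complex.I * t) • H)‖
      ≤ 2 * |B| * ‖O‖ * ‖a‖ * |t| := by
  have hHB : IsSelfAdjoint (H - (B : ℂ) • O) := hH.sub (.smul (Complex.conj_ofReal B) hO)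
  rw [neg_smul, neg_smul]
  refine (norm_exp_mul_mul_exp_neg_sub_le_of_mem_skewAdjoint
    (hHB.I_mul_ofReal_smul_mem_skewAdjoint t) (hH.I_mul_ofReal_smul_mem_skewAdjoint t)
    a).trans_eq ?_
  rw [← smul_sub, sub_sub_cancel_left, smul_neg, norm_neg, norm_smul, norm_smul]
  simp only [Complex.norm_mul, Complex.norm_I, Complex.norm_real, Real.norm_eq_abs, one_mul]
  ring

end CStarAlgebra

theorem norm_integral_smul_le_of_norm_le_mul {α 𝕜 E : Type*} [MeasurableSpace α]
    {μ : MeasureTheory.Measure α} [NormedField 𝕜] [NormedAddCommGroup E] [NormedSpace ℝ E]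
    [NormedSpace 𝕜 E] {g : α → 𝕜} {F : α → E} {w : α → ℝ} {C : ℝ}
    (hw : MeasureTheory.Integrable (fun x => w x * ‖g x‖) μ) (hF : ∀ x, ‖F x‖ ≤ C * w x) :
    ‖∫ x, g x • F x ∂μ‖ ≤ C * ∫ x, w x * ‖g x‖ ∂μ := by
  rw [← MeasureTheory.integral_const_mul]
  refine MeasureTheory.norm_integral_le_of_norm_le (hw.const_mul C) (.of_forall fun x => ?_)
  rw [norm_smul]
  calc ‖g x‖ * ‖F x‖ ≤ ‖g x‖ * (C * w x) := by gcongr; exact hF x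
    _ = C * (w x * ‖g x‖) := by ring

theorem smeared_evolution_field_lipschitz_general {n : ℕ} (H O A : Matrix (Fin n) (Fin n) ℂ)
    (hH : H.IsHermitian) (hO : O.IsHermitian) (B : ℝ)
    (g : ℝ → ℂ)
    (hg2 : MeasureTheory.Integrable (fun t : ℝ => |t| * ‖g t‖)) :
    ‖∫ t : ℝ, g t •
        (NormedSpace.exp ((Complex.I * (t : ℂ)) • (H - (B : ℂ) • O)) * A *
            NormedSpace.exp (-(Complex.I * (t : ℂ)) • (H - (B : ℂ) • O))
          - NormedSpace.exp ((Complex.I * (t : ℂ)) • H) * A *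
            NormedSpace.exp (-(Complex.I * (t : ℂ)) • H))‖
      ≤ 2 * |B| * ‖O‖ * ‖A‖ * ∫ t : ℝ, |t| * ‖g t‖ :=
  norm_integral_smul_le_of_norm_le_mul hg2 fun t =>
    norm_exp_conj_perturbed_sub_exp_conj_le hH.isSelfAdjoint hO.isSelfAdjoint B t A

/-- For Hermitian `n×n` matrices `H`, `O`, any matrix `A`, `B ∈ ℝ`,
`H_B = H − B·O`, and measurable `g : ℝ → ℂ` with `∫ |g| < ∞` and `∫ |t||g(t)| dt < ∞`,
the smeared Heisenberg evolution is Lipschitz in the symmetry-breaking field `B`: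
`‖∫ g(t)(e^{itH_B} A e^{−itH_B} − e^{itH} A e^{−itH}) dt‖ ≤ 2|B|‖O‖‖A‖ ∫ |t||g(t)| dt`. -/
theorem smeared_evolution_field_lipschitz {n : ℕ} (H O A : Matrix (Fin n) (Fin n) ℂ)
    (hH : H.IsHermitian) (hO : O.IsHermitian) (B : ℝ)
    (g : ℝ → ℂ) (hgm : Measurable g)
    (hg1 : MeasureTheory.Integrable g)
    (hg2 : MeasureTheory.Integrable (fun t : ℝ => |t| * ‖g t‖)) :
    ‖∫ t : ℝ, g t •
        (NormedSpace.exp ((Complex.I * (t : ℂ)) • (H - (B : ℂ) • O)) * A *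
            NormedSpace.exp (-(Complex.I * (t : ℂ)) • (H - (B : ℂ) • O))
          - NormedSpace.exp ((Complex.I * (t : ℂ)) • H) * A *
            NormedSpace.exp (-(Complex.I * (t : ℂ)) • H))‖
      ≤ 2 * |B| * ‖O‖ * ‖A‖ * ∫ t : ℝ, |t| * ‖g t‖ :=
  smeared_evolution_field_lipschitz_general H O A hH hO B g hg2
end

section
/- Let d ≥ 2 be an integer. Then the function k ↦ (d + Σ_{i=1}^d cos k^{(i)})^{−1/2} is Lebesgue integrable on the cube [−π, π]^d; equivalently, with 𝓔_k = d − Σ_{i=1}^d cos k^{(i)} and Q = (π, π, …, π), the integral ∫_{[−π,π]^d} 𝓔_{k+Q}^{−1/2} dk is finite. -/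
/-!
Since `d + Σ cos kᵢ = Σ (1 + cos kᵢ)` is a sum of nonnegative terms, dropping all but two of
them and applying AM–GM gives
`(Σ (1 + cos kᵢ))^{-1/2} ≤ 2^{-1/2} (1 + cos k₀)^{-1/4} (1 + cos k₁)^{-1/4}`,
a product of functions of one coordinate each. Each factor is integrable on `[-π, π]` because
`1 + cos x ≥ (2/π²)(π - |x|)²`, so `(1 + cos x)^{-1/4}` has only a `(π - |x|)^{-1/2}` singularity.
-/

open MeasureTheory Real Set Finset

lemma quadratic_le_one_add_cos {x : ℝ} (hx : |x| ≤ π) :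
    2 / π ^ 2 * (π - |x|) ^ 2 ≤ 1 + cos x := by
  have h := cos_le_one_sub_mul_cos_sq (x := π - |x|)
    (by rw [abs_of_nonneg (by linarith)]; linarith [abs_nonneg x])
  rw [cos_pi_sub, cos_abs] at h
  linarith

lemma one_add_cos_pos_of_mem_Ioo {x : ℝ} (hx : x ∈ Ioo (-π) π) : 0 < 1 + cos x := by
  have hx' : |x| < π := abs_lt.2 hx
  have : 0 < 2 / π ^ 2 * (π - |x|) ^ 2 := by
    have := sub_pos.2 hx'
    positivity
  exact this.trans_le (quadratic_le_one_add_cos hx'.le)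

lemma integrableOn_one_add_cos_rpow {p : ℝ} (hp : -(1 / 2) < p) (hp0 : p ≤ 0) :
    IntegrableOn (fun x => (1 + cos x) ^ p) (Ioo (-π) π) := by
  have hq : -1 < 2 * p := by linarith
  have hπ : -π ≤ π := by linarith [pi_pos]
  have hleft : IntegrableOn (fun x => (π - x) ^ (2 * p)) (Icc (-π) π) := by
    rw [← intervalIntegrable_iff_integrableOn_Icc_of_le hπ]
    simpa [two_mul] using
      (intervalIntegral.intervalIntegrable_rpow' hq (a := 2 * π) (b := 0)).comp_sub_left π
  have hright : IntegrableOn (fun x => (π + x) ^ (2 * p)) (Icc (-π) π) := by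
    rw [← intervalIntegrable_iff_integrableOn_Icc_of_le hπ]
    simpa [two_mul] using
      (intervalIntegral.intervalIntegrable_rpow' hq (a := 0) (b := 2 * π)).comp_add_left π
  refine (((hleft.add hright).mono_set Ioo_subset_Icc_self).const_mul ((2 / π ^ 2) ^ p)).mono'
    (Measurable.aestronglyMeasurable (by fun_prop))
    (ae_restrict_of_forall_mem measurableSet_Ioo fun x hx => ?_)
  have hx' : |x| < π := abs_lt.2 hx
  have ht : 0 < π - |x| := sub_pos.2 hx'
  rw [norm_of_nonneg (rpow_nonneg (one_add_cos_pos_of_mem_Ioo hx).le _)]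
  calc (1 + cos x) ^ p
      ≤ (2 / π ^ 2 * (π - |x|) ^ 2) ^ p :=
        rpow_le_rpow_of_nonpos (by positivity) (quadratic_le_one_add_cos hx'.le) hp0
    _ = (2 / π ^ 2) ^ p * (π - |x|) ^ (2 * p) := by
        rw [mul_rpow (by positivity) (by positivity), ← rpow_natCast_mul ht.le]
        norm_num
    _ ≤ (2 / π ^ 2) ^ p * ((π - x) ^ (2 * p) + (π + x) ^ (2 * p)) := by
        have hl : 0 ≤ (π - x) ^ (2 * p) := rpow_nonneg (by linarith [hx.2]) _
        have hr : 0 ≤ (π + x) ^ (2 * p) := rpow_nonneg (by linarith [hx.1]) _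
        gcongr
        rcases abs_cases x with ⟨h, -⟩ | ⟨h, -⟩ <;> rw [h]
        · exact le_add_of_nonneg_right hr
        · rw [sub_neg_eq_add]
          exact le_add_of_nonneg_left hl

lemma rpow_sum_le_two_rpow_mul_rpow_half {ι : Type*} {s : Finset ι} {f : ι → ℝ}
    (hf : ∀ l ∈ s, 0 ≤ f l) {i j : ι} (hi : i ∈ s) (hj : j ∈ s) (hij : i ≠ j)
    (hfi : 0 < f i) (hfj : 0 < f j) {p : ℝ} (hp : p ≤ 0) :
    (∑ l ∈ s, f l) ^ p ≤ 2 ^ p * (f i ^ (p / 2) * f j ^ (p / 2)) := by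
  have hamgm : 2 * (f i ^ (1 / 2 : ℝ) * f j ^ (1 / 2 : ℝ)) ≤ ∑ l ∈ s, f l := by
    have := geom_mean_le_arith_mean2_weighted (w₁ := 1 / 2) (w₂ := 1 / 2)
      (by norm_num) (by norm_num) hfi.le hfj.le (by norm_num)
    linarith [add_le_sum hf hi hj hij]
  calc (∑ l ∈ s, f l) ^ p
      ≤ (2 * (f i ^ (1 / 2 : ℝ) * f j ^ (1 / 2 : ℝ))) ^ p :=
        rpow_le_rpow_of_nonpos (by positivity) hamgm hp
    _ = 2 ^ p * (f i ^ (p / 2) * f j ^ (p / 2)) := by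
        rw [mul_rpow (by norm_num) (by positivity), mul_rpow (by positivity) (by positivity),
          ← rpow_mul hfi.le, ← rpow_mul hfj.le]
        ring_nf

theorem integrableOn_sum_one_add_cos_rpow {ι : Type*} [Fintype ι] {i j : ι} (hij : i ≠ j)
    {p : ℝ} (hp : -1 < p) (hp0 : p ≤ 0) :
    IntegrableOn (fun k : ι → ℝ => (∑ l, (1 + cos (k l))) ^ p)
      (univ.pi fun _ => Icc (-π) π) := by
  classical
  let g : ι → ℝ → ℝ := fun l x => if l ∈ ({i, j} : Finset ι) then (1 + cos x) ^ (p / 2) else 1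
  have hdom : IntegrableOn (fun k : ι → ℝ => 2 ^ p * ∏ l, g l (k l))
      (univ.pi fun _ => Ioo (-π) π) := by
    refine Integrable.const_mul ?_ _
    rw [volume_pi, Measure.restrict_pi_pi]
    refine Integrable.fintype_prod fun l => ?_
    by_cases hl : l ∈ ({i, j} : Finset ι)
    · simp only [g, if_pos hl]
      exact integrableOn_one_add_cos_rpow (by linarith) (by linarith)
    · simp only [g, if_neg hl]
      exact integrable_const 1
  -- On the open cube every `1 + cos (k l)` is positive, as the AM–GM bound requires.
  refine IntegrableOn.congr_set_ae ?_ (Measure.pi_Ioo_ae_eq_pi_Icc (μ := fun _ => volume)).symm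
  refine hdom.mono' (Measurable.aestronglyMeasurable (by fun_prop)) (ae_restrict_of_forall_mem
    (MeasurableSet.univ_pi fun _ => measurableSet_Ioo) fun k hk => ?_)
  have hpos : ∀ l, 0 < 1 + cos (k l) := fun l => one_add_cos_pos_of_mem_Ioo (hk l trivial)
  rw [norm_of_nonneg (rpow_nonneg (sum_nonneg fun l _ => (hpos l).le) _), prod_ite_mem,
    Finset.univ_inter, prod_pair hij]
  exact rpow_sum_le_two_rpow_mul_rpow_half (fun l _ => (hpos l).le) (mem_univ i) (mem_univ j)
    hij (hpos i) (hpos j) hp0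

/-- For `d ≥ 2` the function `k ↦ (d + Σᵢ cos k⁽ⁱ⁾)^{−1/2}`, i.e.
`𝓔_{k+Q}^{−1/2}` with `Q = (π,…,π)`, is Lebesgue integrable on the cube `[−π, π]^d`. -/
theorem inverse_sqrt_dispersion_integrable (d : ℕ) (hd : 2 ≤ d) :
    MeasureTheory.IntegrableOn
      (fun k : Fin d → ℝ => ((d : ℝ) + ∑ i, Real.cos (k i)) ^ (-(1 / 2 : ℝ)))
      (Set.univ.pi fun _ : Fin d => Set.Icc (-Real.pi) Real.pi) := by
  have h := integrableOn_sum_one_add_cos_rpow (i := (⟨0, by omega⟩ : Fin d)) (j := ⟨1, by omega⟩)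
    (by simp [Fin.ext_iff]) (p := -(1 / 2)) (by norm_num) (by norm_num)
  simpa [sum_add_distrib] using h
end

section
/- Let d ≥ 2 be an integer. There exists a constant C = C(d) > 0 such that for every positive integer L, with the discrete momentum set K_L = {πn/L : n ∈ ℤ, −L < n ≤ L}^d and Q = (π, π, …, π): (2L)^{−d} · Σ_{k ∈ K_L, k ≠ Q} (d + Σ_{i=1}^d cos k^{(i)})^{−1/2} ≤ C. That is, the Riemann sums of 𝓔_{k+Q}^{−1/2} over the discrete Brillouin zone, omitting the singular momentum Q, are bounded uniformly in the system size L. -/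
/-!
Write `δᵢ = L - |nᵢ|` for the lattice distance of the `i`-th coordinate from the singular value
`L`. Since `1 + cos (π nᵢ / L) = 2 cos² (π nᵢ / 2L) ≥ 2 (δᵢ / L)²` by Jordan's inequality, the
term at `n ≠ Q` is at most `L / (√2 max δ) ≤ √2 L / (max δ + 1) ≤ √2 L ∏ᵢ (δᵢ + 1) ^ (-1/d)`.
This bound factorises over the coordinates, and each one-dimensional sum
`∑ₙ (δ + 1) ^ (-1/d)` is `O(L ^ (1 - 1/d))` because `1/d < 1`. The whole sum is therefore
`O(L ^ d)`, which the normalisation `(2L) ^ (-d)` cancels.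
-/

open Finset Real

namespace Real

theorem two_mul_sq_one_sub_abs_le_one_add_cos_pi_mul {x : ℝ} (hx : |x| ≤ 1) :
    2 * (1 - |x|) ^ 2 ≤ 1 + cos (π * x) := by
  have hcos_half : 1 - |x| ≤ cos (π * x / 2) := by
    have hy0 : 0 ≤ π * (1 - |x|) / 2 := by have := pi_pos; nlinarith
    have hy1 : π * (1 - |x|) / 2 ≤ π / 2 := by have := pi_pos; nlinarith [abs_nonneg x]
    calc 1 - |x| = 2 / π * (π * (1 - |x|) / 2) := by field_simp
      _ ≤ sin (π * (1 - |x|) / 2) := mul_le_sin hy0 hy1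
      _ = cos (π * x / 2) := by
        rw [← cos_pi_div_two_sub, ← cos_abs (π * x / 2), abs_div, abs_mul, abs_of_pos pi_pos,
          abs_two]
        congr 1; ring
  have hdouble : 1 + cos (π * x) = 2 * cos (π * x / 2) ^ 2 := by
    rw [cos_sq]; ring_nf
  rw [hdouble]
  gcongr

theorem mul_add_one_rpow_sub_one_le {x p : ℝ} (hx : 0 ≤ x) (hp0 : 0 ≤ p) (hp1 : p ≤ 1) :
    p * (x + 1) ^ (p - 1) ≤ (x + 1) ^ p - x ^ p := by
  have hx1 : 0 < x + 1 := by linarith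
  have amgm := geom_mean_le_arith_mean2_weighted hp0 (sub_nonneg.2 hp1) hx hx1.le
    (add_sub_cancel p 1)
  have hcancel : (x + 1) ^ (1 - p) * (x + 1) ^ (p - 1) = 1 := by
    rw [← rpow_add hx1]; simp
  have hshift : (x + 1) ^ (p - 1) * (x + 1) = (x + 1) ^ p := by
    rw [← rpow_add_one hx1.ne']; ring_nf
  have key := mul_le_mul_of_nonneg_right amgm (rpow_nonneg hx1.le (p - 1))
  rw [mul_assoc, hcancel, mul_one,
    show (p * x + (1 - p) * (x + 1)) * (x + 1) ^ (p - 1)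
      = (x + 1) ^ (p - 1) * (x + 1) - p * (x + 1) ^ (p - 1) by ring, hshift] at key
  linarith

end Real

theorem sum_range_add_one_rpow_neg_le {s : ℝ} (hs0 : 0 ≤ s) (hs1 : s < 1) (M : ℕ) :
    ∑ m ∈ range M, ((m : ℝ) + 1) ^ (-s) ≤ (M : ℝ) ^ (1 - s) / (1 - s) := by
  have hp : 0 < 1 - s := by linarith
  induction M with
  | zero => simp [zero_rpow hp.ne']
  | succ M ih =>
    have step := Real.mul_add_one_rpow_sub_one_le (Nat.cast_nonneg M) hp.le (by linarith)
    rw [show 1 - s - 1 = -s by ring] at step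
    rw [sum_range_succ, Nat.cast_succ]
    calc _ ≤ (M : ℝ) ^ (1 - s) / (1 - s) + ((M : ℝ) + 1) ^ (-s) := by gcongr
      _ ≤ ((M : ℝ) + 1) ^ (1 - s) / (1 - s) := by
        rw [div_add' _ _ _ hp.ne', div_le_div_iff_of_pos_right hp]; linarith

-- `n ↦ L - |n|` is at most two-to-one on `(-L, L]`.
theorem sum_Ioc_sub_natAbs_le_two_mul_sum_range {M : Type*} [AddCommMonoid M] [PartialOrder M]
    [IsOrderedAddMonoid M] (f : ℕ → M) (hf : ∀ k, 0 ≤ f k) (L : ℕ) :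
    ∑ n ∈ Ioc (-(L : ℤ)) L, f (L - n.natAbs) ≤ 2 • ∑ k ∈ range (L + 1), f k := by
  classical
  rw [sum_comp, smul_sum]
  calc _ ≤ ∑ k ∈ (Ioc (-(L : ℤ)) L).image (fun n => L - n.natAbs), 2 • f k := by
        refine sum_le_sum fun k _ => nsmul_le_nsmul_left (hf k) ?_
        calc #{n ∈ Ioc (-(L : ℤ)) L | L - n.natAbs = k}
            ≤ #({((L - k : ℕ) : ℤ), -((L - k : ℕ) : ℤ)} : Finset ℤ) := by
              refine card_le_card fun n hn => ?_
              simp only [mem_filter, mem_Ioc] at hn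
              simp only [mem_insert, mem_singleton]
              omega
          _ ≤ 2 := card_le_two
    _ ≤ ∑ k ∈ range (L + 1), 2 • f k := by
        refine sum_le_sum_of_subset_of_nonneg (fun k hk => ?_) fun k _ _ => nsmul_nonneg (hf k) 2
        obtain ⟨n, -, rfl⟩ := mem_image.1 hk
        exact mem_range.2 (by omega)

theorem sum_Ioc_sub_natAbs_add_one_rpow_neg_le {s : ℝ} (hs0 : 0 ≤ s) (hs1 : s < 1) {L : ℕ}
    (hL : 0 < L) :
    ∑ n ∈ Ioc (-(L : ℤ)) L, (((L - n.natAbs : ℕ) : ℝ) + 1) ^ (-s)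
      ≤ 4 / (1 - s) * (L : ℝ) ^ (1 - s) := by
  have hp : 0 < 1 - s := by linarith
  have hL1 : (1 : ℝ) ≤ L := by exact_mod_cast hL
  calc _ ≤ 2 • ∑ k ∈ range (L + 1), ((k : ℝ) + 1) ^ (-s) :=
        sum_Ioc_sub_natAbs_le_two_mul_sum_range (fun k => ((k : ℝ) + 1) ^ (-s))
          (fun k => by positivity) L
    _ ≤ 2 * ((2 * L : ℝ) ^ (1 - s) / (1 - s)) := by
        rw [nsmul_eq_mul, Nat.cast_two]
        gcongr
        refine (sum_range_add_one_rpow_neg_le hs0 hs1 _).trans ?_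
        gcongr
        push_cast
        linarith
    _ ≤ 2 * ((2 * L ^ (1 - s)) / (1 - s)) := by
        gcongr
        rw [mul_rpow zero_le_two (by positivity)]
        gcongr
        exact rpow_le_self_of_one_le one_le_two (by linarith)
    _ = 4 / (1 - s) * (L : ℝ) ^ (1 - s) := by ring

theorem inv_le_prod_rpow_neg_inv_card {ι : Type*} [Fintype ι] [Nonempty ι] {b : ι → ℝ} {B : ℝ}
    (hb : ∀ i, 0 < b i) (hbB : ∀ i, b i ≤ B) :
    B⁻¹ ≤ ∏ i, b i ^ (-(1 / (Fintype.card ι : ℝ))) := by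
  have hB : 0 < B := (hb (Classical.arbitrary ι)).trans_le (hbB _)
  have hcard : (Fintype.card ι : ℝ) ≠ 0 := by exact_mod_cast Fintype.card_ne_zero
  calc B⁻¹ = ∏ _i : ι, B ^ (-(1 / (Fintype.card ι : ℝ))) := by
        rw [prod_const, card_univ, ← rpow_mul_natCast hB.le, neg_mul, one_div_mul_cancel hcard,
          rpow_neg_one]
    _ ≤ ∏ i, b i ^ (-(1 / (Fintype.card ι : ℝ))) := by
        refine prod_le_prod (fun i _ => (rpow_pos_of_pos hB _).le) fun i _ => ?_
        exact rpow_le_rpow_of_nonpos (hb i) (hbB i) (by simp)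

theorem two_mul_sq_sub_natAbs_div_le_one_add_cos {L : ℕ} (hL : 0 < L) {n : ℤ}
    (hn : n.natAbs ≤ L) :
    2 * (((L - n.natAbs : ℕ) : ℝ) / L) ^ 2 ≤ 1 + cos (π * n / L) := by
  have hLR : (0 : ℝ) < L := by exact_mod_cast hL
  have habs : |(n / L : ℝ)| = n.natAbs / L := by
    rw [abs_div, Nat.abs_cast, Nat.cast_natAbs, Int.cast_abs]
  have hx : |(n / L : ℝ)| ≤ 1 := by
    rw [habs, div_le_one hLR]; exact_mod_cast hn
  have key := two_mul_sq_one_sub_abs_le_one_add_cos_pi_mul hx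
  rwa [habs, one_sub_div hLR.ne', ← Nat.cast_sub hn, ← mul_div_assoc] at key

theorem rpow_neg_half_sum_one_add_cos_le {ι : Type*} [Fintype ι] {L : ℕ} (hL : 0 < L)
    {n : ι → ℤ} (hn : ∀ i, n i ∈ Ioc (-(L : ℤ)) L) (hne : n ≠ fun _ => (L : ℤ)) :
    (∑ i, (1 + cos (π * n i / L))) ^ (-(1 / 2 : ℝ))
      ≤ √2 * L * ∏ i, (((L - (n i).natAbs : ℕ) : ℝ) + 1) ^ (-(1 / (Fintype.card ι : ℝ))) := by
  obtain ⟨k, hk⟩ : ∃ k, n k ≠ L := not_forall.1 fun h => hne (funext h)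
  have : Nonempty ι := ⟨k⟩
  set δ : ι → ℕ := fun i => L - (n i).natAbs
  -- Only the coordinate with the largest gap `δ j` (at least 1, as `n ≠ Q`) bounds the energy.
  obtain ⟨j, hj⟩ := Finite.exists_max δ
  have hδk : 1 ≤ δ k := show 1 ≤ L - (n k).natAbs by have := mem_Ioc.1 (hn k); omega
  have hLR : (0 : ℝ) < L := by exact_mod_cast hL
  have hδjR : (1 : ℝ) ≤ δ j := by exact_mod_cast hδk.trans (hj k)
  set E := ∑ i, (1 + cos (π * n i / L))
  have hE : 2 * ((δ j : ℝ) / L) ^ 2 ≤ E :=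
    (two_mul_sq_sub_natAbs_div_le_one_add_cos hL (by have := mem_Ioc.1 (hn j); omega)).trans
      (single_le_sum (f := fun i => 1 + cos (π * n i / L))
        (fun i _ => by linarith [neg_one_le_cos (π * n i / L)]) (mem_univ j))
  have hsqrt : ((δ j : ℝ) + 1) / (√2 * L) ≤ √E := by
    refine le_sqrt_of_sq_le (le_trans ?_ hE)
    rw [div_pow, mul_pow, sq_sqrt zero_le_two, div_pow, div_le_iff₀ (by positivity)]
    field_simp
    nlinarith
  calc E ^ (-(1 / 2 : ℝ)) = (√E)⁻¹ := by
        rw [sqrt_eq_rpow, rpow_neg ((by positivity : (0:ℝ) < 2 * ((δ j : ℝ) / L) ^ 2).le.trans hE)]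
    _ ≤ (((δ j : ℝ) + 1) / (√2 * L))⁻¹ := inv_anti₀ (by positivity) hsqrt
    _ = √2 * L * ((δ j : ℝ) + 1)⁻¹ := by rw [inv_div, div_eq_mul_inv]
    _ ≤ _ := by
        gcongr
        exact inv_le_prod_rpow_neg_inv_card (fun i => by positivity)
          (fun i => by gcongr; exact_mod_cast hj i)

theorem sum_rpow_neg_half_sum_one_add_cos_le {ι : Type*} [Fintype ι] [DecidableEq ι] {L : ℕ}
    (hL : 0 < L) :
    ∑ n ∈ (Fintype.piFinset fun _ : ι => Ioc (-(L : ℤ)) L).filter (fun n => n ≠ fun _ => (L : ℤ)),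
        (∑ i, (1 + cos (π * n i / L))) ^ (-(1 / 2 : ℝ))
      ≤ √2 * L * (∑ m ∈ Ioc (-(L : ℤ)) L,
          (((L - m.natAbs : ℕ) : ℝ) + 1) ^ (-(1 / (Fintype.card ι : ℝ)))) ^ Fintype.card ι := by
  calc _ ≤ ∑ n ∈ (Fintype.piFinset fun _ : ι => Ioc (-(L : ℤ)) L).filter
            (fun n => n ≠ fun _ => (L : ℤ)),
          √2 * L * ∏ i, (((L - (n i).natAbs : ℕ) : ℝ) + 1) ^ (-(1 / (Fintype.card ι : ℝ))) := by
        refine sum_le_sum fun n hn => ?_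
        rw [mem_filter, Fintype.mem_piFinset] at hn
        exact rpow_neg_half_sum_one_add_cos_le hL hn.1 hn.2
    _ ≤ ∑ n ∈ Fintype.piFinset fun _ : ι => Ioc (-(L : ℤ)) L,
          √2 * L * ∏ i, (((L - (n i).natAbs : ℕ) : ℝ) + 1) ^ (-(1 / (Fintype.card ι : ℝ))) :=
        sum_le_sum_of_subset_of_nonneg (filter_subset _ _) fun _ _ _ => by positivity
    _ = _ := by
        rw [← mul_sum, sum_prod_piFinset _
          (fun (_ : ι) (m : ℤ) => (((L - m.natAbs : ℕ) : ℝ) + 1) ^ (-(1 / (Fintype.card ι : ℝ)))),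
          prod_const, card_univ]

/-- For `d ≥ 2`, the Riemann sums of `𝓔_{k+Q}^{−1/2}` over the discrete
Brillouin zone `K_L = {πn/L : −L < n ≤ L}^d`, omitting the singular momentum
`Q = (π,…,π)`, are bounded uniformly in the system size `L`:
`(2L)^{−d} Σ_{k ∈ K_L, k ≠ Q} (d + Σᵢ cos k⁽ⁱ⁾)^{−1/2} ≤ C`. -/
theorem riemann_sum_inverse_sqrt_dispersion_bounded (d : ℕ) (hd : 2 ≤ d) :
    ∃ C : ℝ, 0 < C ∧ ∀ L : ℕ, 0 < L →
      (1 / (2 * (L : ℝ)) ^ d) *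
          ∑ nvec ∈ (Fintype.piFinset fun _ : Fin d =>
              Finset.Ioc (-(L : ℤ)) (L : ℤ)).filter (fun nvec => nvec ≠ fun _ => (L : ℤ)),
            ((d : ℝ) + ∑ i, Real.cos (Real.pi * (nvec i : ℝ) / (L : ℝ))) ^ (-(1 / 2 : ℝ))
        ≤ C := by
  have hd0 : (0 : ℝ) < d := by positivity
  have hs1 : 1 / (d : ℝ) < 1 := by rw [div_lt_one hd0]; exact_mod_cast hd
  have hp : 0 < 1 - 1 / (d : ℝ) := by linarith
  refine ⟨√2 * (2 / (1 - 1 / d)) ^ d, by positivity, fun L hL => ?_⟩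
  have hLR : (0 : ℝ) < L := by exact_mod_cast hL
  have hpow : ((L : ℝ) ^ (1 - 1 / (d : ℝ))) ^ d * L = (L : ℝ) ^ d := by
    rw [← rpow_mul_natCast hLR.le, sub_mul, one_div_mul_cancel hd0.ne', ← rpow_add_one hLR.ne',
      one_mul, sub_add_cancel, rpow_natCast]
  calc _ = 1 / (2 * (L : ℝ)) ^ d *
          ∑ nvec ∈ (Fintype.piFinset fun _ : Fin d => Ioc (-(L : ℤ)) L).filter
              (fun nvec => nvec ≠ fun _ => (L : ℤ)),
            (∑ i, (1 + cos (π * nvec i / L))) ^ (-(1 / 2 : ℝ)) := by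
        simp [sum_add_distrib]
    _ ≤ 1 / (2 * (L : ℝ)) ^ d * (√2 * L * (∑ m ∈ Ioc (-(L : ℤ)) L,
          (((L - m.natAbs : ℕ) : ℝ) + 1) ^ (-(1 / (d : ℝ)))) ^ d) := by
        gcongr
        simpa using sum_rpow_neg_half_sum_one_add_cos_le (ι := Fin d) hL
    _ ≤ 1 / (2 * (L : ℝ)) ^ d * (√2 * L * (4 / (1 - 1 / d) * (L : ℝ) ^ (1 - 1 / (d : ℝ))) ^ d) := by
        gcongr
        exact sum_Ioc_sub_natAbs_add_one_rpow_neg_le (by positivity) hs1 hL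
    _ = √2 * (2 / (1 - 1 / d)) ^ d := by
        rw [mul_pow, mul_pow, ← hpow, show (4 : ℝ) = 2 * 2 by norm_num, mul_div_assoc, mul_pow]
        field_simp
end
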